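/- arXiv:2310.00556 — 2 statements merged into one kernel-verified Lean document; each statement's English description precedes it below -/
import Mathlib

section
/- Let N = 2 or 3, ε > 0, 0 ≤ Ω < ∞, and x_ε ∈ ℝᴺ with |x_ε| bounded. For u ∈ H¹(ℝᴺ,ℂ) define ‖u‖_ε² = ∫_{ℝᴺ} [ |(∇ − iε² x^Ω)u|² + (1 + ε²(|εx + x_ε|² − 1)²) |u|² ] dx. Then there exists a constant C > 0, independent of ε small, such that ‖u‖²_{H¹(ℝᴺ)} ≤ C ‖u‖_ε² for all u with ‖u‖_ε < ∞. -/
open MeasureTheory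

/-- The rotational vector field `x^Ω`. -/
noncomputable def xOmega (N : ℕ) (Ω : ℝ) (x : EuclideanSpace ℝ (Fin N)) :
    EuclideanSpace ℝ (Fin N) :=
  (WithLp.equiv 2 (Fin N → ℝ)).symm (fun j =>
    if (j : ℕ) = 0 then -(Ω / 2) * (if h : 1 < N then x ⟨1, h⟩ else 0)
    else if (j : ℕ) = 1 then (Ω / 2) * (if h : 0 < N then x ⟨0, h⟩ else 0)
    else 0)

/-- The squared magnetic norm
`‖u‖_ε² = ∫ |(∇ − iε²x^Ω)u|² + (1 + ε²(|εx + x_ε|² − 1)²)|u|²`. -/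
noncomputable def normSqEps {N : ℕ} (Ω ε : ℝ) (xε : EuclideanSpace ℝ (Fin N))
    (u : EuclideanSpace ℝ (Fin N) → ℂ) (x : EuclideanSpace ℝ (Fin N)) : ℝ :=
  (∑ j : Fin N, ‖fderiv ℝ u x (EuclideanSpace.single j 1)
      - Complex.I * ((ε ^ 2 * xOmega N Ω x j : ℝ) : ℂ) * u x‖ ^ 2)
    + (1 + ε ^ 2 * (‖ε • x + xε‖ ^ 2 - 1) ^ 2) * ‖u x‖ ^ 2

/-! The estimate holds pointwise. With the potential `A = ε² x^Ω`, the inequality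
`|∂ⱼu|² ≤ 2|∂ⱼu − iAⱼu|² + 2Aⱼ²|u|²` reduces it to bounding `|A|² ≤ (Ω/2)² N ε⁴|x|²` by the
weight `1 + ε²(|εx + x_ε|² − 1)²`. For `|ε| ≤ 1` this follows from `|ε||x| ≤ |εx + x_ε| + M`
and the elementary `t² ≤ 2 + 2(t² − 1)²`, giving
`ε⁴|x|² ≤ (4 + 2M²)(1 + ε²(|εx + x_ε|² − 1)²)`. -/

theorem EuclideanSpace.opNorm_sq_le_sum_sq_apply_single {ι F : Type*} [Fintype ι]
    [DecidableEq ι] [NormedAddCommGroup F] [NormedSpace ℝ F] (f : EuclideanSpace ℝ ι →L[ℝ] F) :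
    ‖f‖ ^ 2 ≤ ∑ i, ‖f (EuclideanSpace.single i 1)‖ ^ 2 := by
  have hbound : ‖f‖ ≤ √(∑ i, ‖f (EuclideanSpace.single i 1)‖ ^ 2) := by
    refine f.opNorm_le_bound (Real.sqrt_nonneg _) fun x => ?_
    have hx : ∑ i, x i • EuclideanSpace.single i (1 : ℝ) = x := by
      simpa using (EuclideanSpace.basisFun ι ℝ).sum_repr x
    calc ‖f x‖ = ‖∑ i, x i • f (EuclideanSpace.single i 1)‖ := by
          simp only [← map_smul, ← map_sum, hx]
      _ ≤ ∑ i, ‖x i‖ * ‖f (EuclideanSpace.single i 1)‖ :=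
          (norm_sum_le _ _).trans_eq (by simp only [norm_smul])
      _ ≤ √(∑ i, ‖x i‖ ^ 2) * √(∑ i, ‖f (EuclideanSpace.single i 1)‖ ^ 2) :=
          Real.sum_mul_le_sqrt_mul_sqrt _ _ _
      _ = _ := by rw [← EuclideanSpace.norm_eq, mul_comm]
  calc ‖f‖ ^ 2 ≤ √(∑ i, ‖f (EuclideanSpace.single i 1)‖ ^ 2) ^ 2 := by gcongr
    _ = _ := Real.sq_sqrt (by positivity)

lemma sum_norm_sq_le_magnetic {ι : Type*} [Fintype ι] (w : ι → ℂ) (a : ι → ℝ) (v : ℂ) :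
    ∑ i, ‖w i‖ ^ 2 ≤
      2 * ∑ i, ‖w i - Complex.I * (a i : ℂ) * v‖ ^ 2 + 2 * (∑ i, a i ^ 2) * ‖v‖ ^ 2 := by
  rw [Finset.mul_sum, Finset.mul_sum, Finset.sum_mul, ← Finset.sum_add_distrib]
  refine Finset.sum_le_sum fun i _ => ?_
  have hpot : ‖Complex.I * (a i : ℂ) * v‖ = |a i| * ‖v‖ := by
    rw [norm_mul, norm_mul, Complex.norm_I, one_mul, Complex.norm_real, Real.norm_eq_abs]
  calc ‖w i‖ ^ 2 ≤ (‖w i - Complex.I * (a i : ℂ) * v‖ + |a i| * ‖v‖) ^ 2 := by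
        gcongr
        simpa [hpot] using norm_le_norm_sub_add (w i) (Complex.I * (a i : ℂ) * v)
    _ ≤ 2 * (‖w i - Complex.I * (a i : ℂ) * v‖ ^ 2 + (|a i| * ‖v‖) ^ 2) := add_sq_le
    _ = _ := by rw [mul_pow, sq_abs]; ring

lemma xOmega_apply_sq_le {N : ℕ} (Ω : ℝ) (x : EuclideanSpace ℝ (Fin N)) (j : Fin N) :
    xOmega N Ω x j ^ 2 ≤ (Ω / 2) ^ 2 * ‖x‖ ^ 2 := by
  have hcoord : ∀ k, x k ^ 2 ≤ ‖x‖ ^ 2 := fun k =>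
    sq_le_sq.mpr (by simpa [abs_norm] using PiLp.norm_apply_le x k)
  simp only [xOmega, WithLp.equiv_symm_apply, PiLp.toLp_apply]
  split_ifs <;> simp only [mul_zero, neg_mul, neg_sq, mul_pow, ne_eq, OfNat.ofNat_ne_zero,
    not_false_eq_true, zero_pow] <;>
    first | positivity | exact mul_le_mul_of_nonneg_left (hcoord _) (sq_nonneg _)

lemma pow_four_mul_norm_sq_le {E : Type*} [NormedAddCommGroup E] [NormedSpace ℝ E]
    {ε M : ℝ} (hε : |ε| ≤ 1) {y : E} (hy : ‖y‖ ≤ M) (x : E) :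
    ε ^ 4 * ‖x‖ ^ 2 ≤ (4 + 2 * M ^ 2) * (1 + ε ^ 2 * (‖ε • x + y‖ ^ 2 - 1) ^ 2) := by
  set t := ‖ε • x + y‖
  have hdist : |ε| * ‖x‖ ≤ t + M := by
    calc |ε| * ‖x‖ = ‖(ε • x + y) - y‖ := by
          rw [add_sub_cancel_right, norm_smul, Real.norm_eq_abs]
      _ ≤ t + ‖y‖ := norm_sub_le _ _
      _ ≤ t + M := by gcongr
  have hε2 : ε ^ 2 ≤ 1 := by rw [← sq_abs]; exact pow_le_one₀ (abs_nonneg ε) hε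
  have ht : t ^ 2 ≤ 2 + 2 * (t ^ 2 - 1) ^ 2 := by nlinarith [sq_nonneg (2 * t ^ 2 - 5 / 2)]
  have hsq : ε ^ 2 * ‖x‖ ^ 2 ≤ 2 * t ^ 2 + 2 * M ^ 2 := by
    calc ε ^ 2 * ‖x‖ ^ 2 = (|ε| * ‖x‖) ^ 2 := by rw [mul_pow, sq_abs]
      _ ≤ (t + M) ^ 2 := by gcongr
      _ ≤ 2 * t ^ 2 + 2 * M ^ 2 := by nlinarith [sq_nonneg (t - M)]
  nlinarith [mul_le_mul_of_nonneg_left hsq (sq_nonneg ε),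
    mul_le_mul_of_nonneg_left ht (sq_nonneg ε),
    mul_nonneg (sq_nonneg M) (mul_nonneg (sq_nonneg ε) (sq_nonneg (t ^ 2 - 1)))]

lemma norm_fderiv_sq_add_norm_sq_le_normSqEps {N : ℕ} (Ω : ℝ) {ε M : ℝ} (hε : |ε| ≤ 1)
    {y : EuclideanSpace ℝ (Fin N)} (hy : ‖y‖ ≤ M) (u : EuclideanSpace ℝ (Fin N) → ℂ)
    (x : EuclideanSpace ℝ (Fin N)) :
    ‖fderiv ℝ u x‖ ^ 2 + ‖u x‖ ^ 2 ≤ (N * Ω ^ 2 * (2 + M ^ 2) + 2) * normSqEps Ω ε y u x := by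
  set a : Fin N → ℝ := fun j => ε ^ 2 * xOmega N Ω x j
  set s := ε ^ 2 * (‖ε • x + y‖ ^ 2 - 1) ^ 2
  set D := ∑ j, ‖fderiv ℝ u x (EuclideanSpace.single j 1) - Complex.I * (a j : ℂ) * u x‖ ^ 2
  have hpot : ∑ j, a j ^ 2 ≤ N * Ω ^ 2 * (2 + M ^ 2) / 2 * (1 + s) := by
    calc ∑ j, a j ^ 2 ≤ ∑ _j : Fin N, (Ω / 2) ^ 2 * ((4 + 2 * M ^ 2) * (1 + s)) :=
          Finset.sum_le_sum fun j _ => calc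
            a j ^ 2 = ε ^ 4 * xOmega N Ω x j ^ 2 := by ring
            _ ≤ ε ^ 4 * ((Ω / 2) ^ 2 * ‖x‖ ^ 2) :=
                mul_le_mul_of_nonneg_left (xOmega_apply_sq_le Ω x j) (by positivity)
            _ = (Ω / 2) ^ 2 * (ε ^ 4 * ‖x‖ ^ 2) := by ring
            _ ≤ (Ω / 2) ^ 2 * ((4 + 2 * M ^ 2) * (1 + s)) :=
                mul_le_mul_of_nonneg_left (pow_four_mul_norm_sq_le hε hy x) (sq_nonneg _)
      _ = _ := by
          simp only [Finset.sum_const, Finset.card_univ, Fintype.card_fin, nsmul_eq_mul]; ring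
  have hgrad : ‖fderiv ℝ u x‖ ^ 2 ≤ 2 * D + 2 * (∑ j, a j ^ 2) * ‖u x‖ ^ 2 :=
    (EuclideanSpace.opNorm_sq_le_sum_sq_apply_single _).trans (sum_norm_sq_le_magnetic _ _ _)
  have hnorm : normSqEps Ω ε y u x = D + (1 + s) * ‖u x‖ ^ 2 := rfl
  have hK : 0 ≤ (N : ℝ) * Ω ^ 2 * (2 + M ^ 2) := by positivity
  have hs : 0 ≤ s := by positivity
  have hD : 0 ≤ D := by positivity
  rw [hnorm]
  nlinarith [mul_le_mul_of_nonneg_right hpot (sq_nonneg ‖u x‖), mul_nonneg hK hD,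
    mul_nonneg hs (sq_nonneg ‖u x‖)]

theorem H1_le_eps_norm_general {N : ℕ} (Ω : ℝ)
    (xε : ℝ → EuclideanSpace ℝ (Fin N)) (M : ℝ) (hxε : ∀ ε, ‖xε ε‖ ≤ M) :
    ∃ ε₀ > 0, ∃ C > 0, ∀ ε : ℝ, 0 < ε → ε < ε₀ →
      ∀ u : EuclideanSpace ℝ (Fin N) → ℂ, Differentiable ℝ u →
        Integrable (normSqEps Ω ε (xε ε) u) volume →
        (∫ x, (‖fderiv ℝ u x‖ ^ 2 + ‖u x‖ ^ 2)) ≤ C * ∫ x, normSqEps Ω ε (xε ε) u x := by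
  refine ⟨1, one_pos, N * Ω ^ 2 * (2 + M ^ 2) + 2, by positivity, ?_⟩
  intro ε hε hε1 u _ hint
  rw [← integral_const_mul]
  -- no integrability of the left side is needed: otherwise its integral is `0`
  refine integral_mono_of_nonneg (ae_of_all _ fun x => by positivity) (hint.const_mul _)
    (ae_of_all _ fun x => ?_)
  exact norm_fderiv_sq_add_norm_sq_le_normSqEps Ω (abs_le.mpr ⟨by linarith, hε1.le⟩) (hxε ε) u x

/-- For `N = 2, 3`, fixed `0 ≤ Ω < ∞` and `x_ε` bounded, there exists a constant
`C > 0`, independent of small `ε > 0`, such that `‖u‖²_{H¹} ≤ C ‖u‖_ε²` for all `u`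
with `‖u‖_ε < ∞`. -/
theorem H1_le_eps_norm {N : ℕ} (hN : N = 2 ∨ N = 3) (Ω : ℝ) (hΩ : 0 ≤ Ω)
    (xε : ℝ → EuclideanSpace ℝ (Fin N)) (M : ℝ) (hxε : ∀ ε, ‖xε ε‖ ≤ M) :
    ∃ ε₀ > 0, ∃ C > 0, ∀ ε : ℝ, 0 < ε → ε < ε₀ →
      ∀ u : EuclideanSpace ℝ (Fin N) → ℂ, Differentiable ℝ u →
        Integrable (normSqEps Ω ε (xε ε) u) volume →
        (∫ x, (‖fderiv ℝ u x‖ ^ 2 + ‖u x‖ ^ 2)) ≤ C * ∫ x, normSqEps Ω ε (xε ε) u x :=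
  H1_le_eps_norm_general Ω xε M hxε
end

section
/- Let g : ℝᴺ → ℂ be C¹ with g(x) = Q(x) + v(x), where Q is the positive radial ground state of −Δu + u − u³ = 0 and v is C¹ with ‖e^{(2/3)|x|} v‖_∞ ≤ Cμ^{−2} and ‖e^{(1/2)|x|} ∇v‖_∞ ≤ Cμ^{−2} for a large parameter μ. If the origin is a critical point of |g(· + y)|² for some shift y ∈ ℝᴺ with |y| = o(1), i.e., ∇(|g|²)(y) = 0, then |y| = O(μ^{−2}). -/
open MeasureTheory
open scoped ContDiff

/-- The Laplacian of a real-valued function on `ℝᴺ`. -/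
noncomputable def lap {N : ℕ} (f : EuclideanSpace ℝ (Fin N) → ℝ)
    (x : EuclideanSpace ℝ (Fin N)) : ℝ :=
  ∑ j : Fin N, fderiv ℝ (fun y => fderiv ℝ f y (EuclideanSpace.single j 1)) x
    (EuclideanSpace.single j 1)

private lemma hasDerivAt_line {N : ℕ} {f : EuclideanSpace ℝ (Fin N) → ℝ}
    (hf : Differentiable ℝ f) (p u : EuclideanSpace ℝ (Fin N)) (t : ℝ) :
    HasDerivAt (fun s : ℝ => f (p + s • u)) (fderiv ℝ f (p + t • u) u) t := by
  have h1 : HasDerivAt (fun s : ℝ => p + s • u) u t := by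
    simpa using (((hasDerivAt_id t).smul_const u).const_add p)
  exact ((hf (p + t • u)).hasFDerivAt.comp_hasDerivAt t h1)

private lemma norm_combo {N : ℕ} {i j : Fin N} (hij : i ≠ j) (t s : ℝ) :
    ‖t • EuclideanSpace.single i (1:ℝ) + s • EuclideanSpace.single j (1:ℝ)‖
      = Real.sqrt (t^2 + s^2) := by
  have h0 : (inner ℝ (t • EuclideanSpace.single i (1:ℝ)) (s • EuclideanSpace.single j (1:ℝ)) : ℝ) = 0 := by
    simp [real_inner_smul_left, real_inner_smul_right, EuclideanSpace.inner_single_left,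
      EuclideanSpace.single_apply, hij.symm]
  have h1 : ‖t • EuclideanSpace.single i (1:ℝ) + s • EuclideanSpace.single j (1:ℝ)‖^2 = t^2 + s^2 := by
    rw [norm_add_sq_real, h0]
    simp [norm_smul, EuclideanSpace.norm_single, mul_pow, sq_abs]
  rw [← h1, Real.sqrt_sq (norm_nonneg _)]

section Radial
variable {N : ℕ} (Q : EuclideanSpace ℝ (Fin N) → ℝ) (j₀ : Fin N)

noncomputable def prof (t : ℝ) : ℝ := Q (t • EuclideanSpace.single j₀ 1)

variable (hQs : ContDiff ℝ (⊤ : ℕ∞) Q) (hQrad : ∀ x y, ‖x‖ = ‖y‖ → Q x = Q y)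

include hQs in
private lemma prof_smooth : ContDiff ℝ (⊤ : ℕ∞) (prof Q j₀) :=
  hQs.comp ((ContinuousLinearMap.smulRight (ContinuousLinearMap.id ℝ ℝ)
    (EuclideanSpace.single j₀ 1)).contDiff)

include hQrad in
private lemma prof_eq (x : EuclideanSpace ℝ (Fin N)) : Q x = prof Q j₀ ‖x‖ := by
  apply hQrad
  rw [norm_smul, EuclideanSpace.norm_single]
  simp [abs_of_nonneg (norm_nonneg x)]

include hQs in
private lemma prof_hasDeriv (t : ℝ) :
    HasDerivAt (prof Q j₀)
      (fderiv ℝ Q (t • EuclideanSpace.single j₀ 1) (EuclideanSpace.single j₀ 1)) t := by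
  have := hasDerivAt_line (f := Q) (hQs.differentiable (by simp)) 0 (EuclideanSpace.single j₀ 1) t
  simp only [zero_add] at this
  exact this

include hQs in
private lemma prof_deriv (t : ℝ) :
    deriv (prof Q j₀) t
      = fderiv ℝ Q (t • EuclideanSpace.single j₀ 1) (EuclideanSpace.single j₀ 1) :=
  (prof_hasDeriv Q j₀ hQs t).deriv

-- generalized: derivative along any unit direction
include hQs hQrad in
private lemma prof_hasDeriv_dir (u : EuclideanSpace ℝ (Fin N)) (hu : ‖u‖ = 1) (t : ℝ) :
    HasDerivAt (prof Q j₀) (fderiv ℝ Q (t • u) u) t := by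
  have h1 : ∀ s : ℝ, Q (s • u) = prof Q j₀ s := by
    intro s
    apply hQrad
    rw [norm_smul, hu, norm_smul, EuclideanSpace.norm_single]
    simp
  have := hasDerivAt_line (f := Q) (hQs.differentiable (by simp)) 0 u t
  simp only [zero_add] at this
  exact (funext h1 : (fun s : ℝ => Q (s • u)) = prof Q j₀) ▸ this

end Radial

section Second
variable {N : ℕ} (Q : EuclideanSpace ℝ (Fin N) → ℝ) (j₀ : Fin N)
  (hQs : ContDiff ℝ (⊤ : ℕ∞) Q) (hQrad : ∀ x y, ‖x‖ = ‖y‖ → Q x = Q y)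

include hQs in
private lemma D_smooth (j : Fin N) :
    ContDiff ℝ ∞ (fun x => fderiv ℝ Q x (EuclideanSpace.single j 1)) :=
  (ContDiff.fderiv_right (hQs.of_le (mod_cast le_top)) (le_of_eq rfl)).clm_apply contDiff_const

include hQs in
private lemma second_diag (t : ℝ) :
    fderiv ℝ (fun x => fderiv ℝ Q x (EuclideanSpace.single j₀ 1))
        (t • EuclideanSpace.single j₀ 1) (EuclideanSpace.single j₀ 1)
      = deriv (deriv (prof Q j₀)) t := by
  have hline := hasDerivAt_line (f := fun x => fderiv ℝ Q x (EuclideanSpace.single j₀ 1))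
    ((D_smooth Q hQs j₀).differentiable (by norm_num)) 0 (EuclideanSpace.single j₀ 1) t
  simp only [zero_add] at hline
  have heq : (fun s : ℝ => fderiv ℝ Q (s • EuclideanSpace.single j₀ 1) (EuclideanSpace.single j₀ 1))
      = deriv (prof Q j₀) := by
    funext s; exact (prof_deriv Q j₀ hQs s).symm
  rw [heq] at hline
  exact hline.deriv.symm

include hQs hQrad in
private lemma second_off (j : Fin N) (hj : j₀ ≠ j) {t : ℝ} (ht : 0 < t) :
    fderiv ℝ (fun x => fderiv ℝ Q x (EuclideanSpace.single j 1))
        (t • EuclideanSpace.single j₀ 1) (EuclideanSpace.single j 1)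
      = deriv (prof Q j₀) t / t := by
  set e1 := EuclideanSpace.single j₀ (1:ℝ) with he1
  set ej := EuclideanSpace.single j (1:ℝ) with hej
  set φ := prof Q j₀ with hφ
  have hQd : Differentiable ℝ Q := hQs.differentiable (by simp)
  have hφs : ContDiff ℝ ∞ φ := (prof_smooth Q j₀ hQs).of_le (mod_cast le_top)
  have hφ's : ContDiff ℝ ∞ (deriv φ) := (contDiff_infty_iff_deriv.mp hφs).2
  -- derivative of s ↦ √(t²+s²)
  have hw : ∀ s : ℝ, HasDerivAt (fun s : ℝ => Real.sqrt (t^2 + s^2))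
      (s / Real.sqrt (t^2 + s^2)) s := by
    intro s
    have hpos : (0:ℝ) < t^2 + s^2 := by positivity
    have h2 : HasDerivAt (fun s : ℝ => t^2 + s^2) (2*s) s := by
      simpa using ((hasDerivAt_pow 2 s).const_add (t^2))
    have := (Real.hasDerivAt_sqrt (ne_of_gt hpos)).comp s h2
    refine this.congr_deriv ?_
    have : Real.sqrt (t^2+s^2) ≠ 0 := by positivity
    rw [div_mul_eq_mul_div, one_mul, mul_div_mul_left _ _ two_ne_zero]
  have hφd : ∀ r : ℝ, HasDerivAt φ (deriv φ r) r := fun r =>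
    ((hφs.differentiable (by norm_num)) r).hasDerivAt
  have hh : ∀ s : ℝ, HasDerivAt (fun s : ℝ => φ (Real.sqrt (t^2+s^2)))
      (deriv φ (Real.sqrt (t^2+s^2)) * (s / Real.sqrt (t^2+s^2))) s := fun s =>
    (hφd _).comp s (hw s)
  have hfun : (fun s : ℝ => Q (t • e1 + s • ej)) = fun s => φ (Real.sqrt (t^2+s^2)) := by
    funext s
    rw [prof_eq Q j₀ hQrad, ← hφ, norm_combo hj]
  have hDval : ∀ s : ℝ, fderiv ℝ Q (t • e1 + s • ej) ej
      = deriv φ (Real.sqrt (t^2+s^2)) * (s / Real.sqrt (t^2+s^2)) := by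
    intro s
    have h1 := hasDerivAt_line (f := Q) hQd (t • e1) ej s
    rw [hfun] at h1
    exact h1.unique (hh s)
  have hline2 : HasDerivAt (fun s : ℝ => fderiv ℝ Q (t • e1 + s • ej) ej)
      (fderiv ℝ (fun x => fderiv ℝ Q x ej) (t • e1) ej) 0 := by
    have := hasDerivAt_line (f := fun x => fderiv ℝ Q x ej)
      ((D_smooth Q hQs j).differentiable (by norm_num)) (t • e1) ej 0
    simpa using this
  have hrw : (fun s : ℝ => fderiv ℝ Q (t • e1 + s • ej) ej)
      = fun s : ℝ => (deriv φ (Real.sqrt (t^2+s^2)) * (Real.sqrt (t^2+s^2))⁻¹) * s := by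
    funext s
    rw [hDval s]
    ring
  rw [hrw] at hline2
  have ht2 : Real.sqrt (t^2 + 0^2) = t := by
    simp [Real.sqrt_sq ht.le]
  have hsqrt_ne : Real.sqrt (t^2 + 0^2) ≠ 0 := by rw [ht2]; exact ne_of_gt ht
  have hA : HasDerivAt (fun s : ℝ => deriv φ (Real.sqrt (t^2+s^2)))
      (deriv (deriv φ) (Real.sqrt (t^2+0^2)) * (0 / Real.sqrt (t^2+0^2))) 0 :=
    (((hφ's.differentiable (by norm_num)) _).hasDerivAt).comp 0 (hw 0)
  have hB : HasDerivAt (fun s : ℝ => (Real.sqrt (t^2+s^2))⁻¹)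
      (-(0 / Real.sqrt (t^2+0^2)) / (Real.sqrt (t^2+0^2))^2) 0 := (hw 0).inv hsqrt_ne
  have hg1 := hA.mul hB
  have hprod := hg1.mul (hasDerivAt_id 0)
  have := hline2.unique hprod
  rw [this, ht2]
  simp [id]
  rw [Real.sqrt_sq ht.le, div_eq_mul_inv]

end Second

section Lap
variable {N : ℕ} (Q : EuclideanSpace ℝ (Fin N) → ℝ) (j₀ : Fin N)
  (hQs : ContDiff ℝ (⊤ : ℕ∞) Q) (hQrad : ∀ x y, ‖x‖ = ‖y‖ → Q x = Q y)

include hQs hQrad in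
private lemma lap_prof {t : ℝ} (ht : 0 < t) :
    lap Q (t • EuclideanSpace.single j₀ 1)
      = deriv (deriv (prof Q j₀)) t + ((N:ℝ) - 1) * (deriv (prof Q j₀) t / t) := by
  have hcard : ((Finset.univ.erase j₀).card : ℝ) = (N:ℝ) - 1 := by
    rw [Finset.card_erase_of_mem (Finset.mem_univ j₀)]
    have hN1 : 1 ≤ N := j₀.pos
    rw [Finset.card_univ, Fintype.card_fin, Nat.cast_sub hN1, Nat.cast_one]
  rw [lap, ← Finset.add_sum_erase _ _ (Finset.mem_univ j₀), second_diag Q j₀ hQs]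
  congr 1
  rw [Finset.sum_congr rfl (fun j hjmem => second_off Q j₀ hQs hQrad j
    (Finset.ne_of_mem_erase hjmem).symm ht), Finset.sum_const, nsmul_eq_mul, hcard]
end Lap

section OneD2
variable {φ : ℝ → ℝ} (hφs : ContDiff ℝ ∞ φ)
include hφs

private lemma phi_deriv_hasDeriv (t : ℝ) : HasDerivAt φ (deriv φ t) t :=
  ((hφs.differentiable (by norm_num)) t).hasDerivAt

private lemma phi_deriv2_hasDeriv (t : ℝ) : HasDerivAt (deriv φ) (deriv (deriv φ) t) t :=
  (((contDiff_infty_iff_deriv.mp hφs).2.differentiable (by norm_num)) t).hasDerivAt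

private lemma deriv_zero_of_even (heven : ∀ t, φ (-t) = φ t) : deriv φ 0 = 0 := by
  have h1 : HasDerivAt (fun t => φ (-t)) (-(deriv φ 0)) 0 := by
    have h0 : HasDerivAt φ (deriv φ 0) (-0 : ℝ) := by simpa using phi_deriv_hasDeriv hφs 0
    have := h0.comp 0 (hasDerivAt_neg (0:ℝ))
    simp only [mul_neg, mul_one] at this
    exact this
  rw [funext heven] at h1
  have := h1.unique (phi_deriv_hasDeriv hφs 0)
  linarith

private lemma second_deriv_at_zero {N : ℕ} (heven : ∀ t, φ (-t) = φ t)
    (hODE : ∀ t : ℝ, 0 < t → deriv (deriv φ) t + ((N:ℝ)-1) * (deriv φ t / t) = φ t - φ t ^ 3) :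
    ((N:ℝ)) * deriv (deriv φ) 0 = φ 0 - φ 0 ^ 3 := by
  have hd0 : deriv φ 0 = 0 := deriv_zero_of_even hφs heven
  -- slope limit : deriv φ t / t → deriv (deriv φ) 0 as t → 0 within Ioi
  have hslope : Filter.Tendsto (fun t => deriv φ t / t) (nhdsWithin 0 (Set.Ioi 0))
      (nhds (deriv (deriv φ) 0)) := by
    have h := hasDerivAt_iff_tendsto_slope.mp (phi_deriv2_hasDeriv hφs 0)
    have h2 := h.mono_left (nhdsWithin_mono 0 (by
      intro x hx
      simp only [Set.mem_compl_iff, Set.mem_singleton_iff]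
      exact ne_of_gt hx))
    refine h2.congr' ?_
    filter_upwards [self_mem_nhdsWithin] with t ht
    simp [slope, hd0, div_eq_inv_mul]
  have hdd : Filter.Tendsto (fun t => deriv (deriv φ) t) (nhdsWithin 0 (Set.Ioi 0))
      (nhds (deriv (deriv φ) 0)) :=
    (((contDiff_infty_iff_deriv.mp (contDiff_infty_iff_deriv.mp hφs).2).2.continuous.tendsto 0)).mono_left
      nhdsWithin_le_nhds
  have hrhs : Filter.Tendsto (fun t => φ t - φ t ^ 3) (nhdsWithin 0 (Set.Ioi 0))
      (nhds (φ 0 - φ 0 ^ 3)) := by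
    have hc := (hφs.continuous.tendsto 0)
    exact ((hc.sub (hc.pow 3))).mono_left nhdsWithin_le_nhds
  have hLHS : Filter.Tendsto (fun t => deriv (deriv φ) t + ((N:ℝ)-1) * (deriv φ t / t))
      (nhdsWithin 0 (Set.Ioi 0)) (nhds (deriv (deriv φ) 0 + ((N:ℝ)-1) * deriv (deriv φ) 0)) :=
    hdd.add (hslope.const_mul _)
  have heq : Filter.Tendsto (fun t => deriv (deriv φ) t + ((N:ℝ)-1) * (deriv φ t / t))
      (nhdsWithin 0 (Set.Ioi 0)) (nhds (φ 0 - φ 0 ^ 3)) := by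
    refine hrhs.congr' ?_
    filter_upwards [self_mem_nhdsWithin] with t ht
    exact (hODE t ht).symm
  have := tendsto_nhds_unique hLHS heq
  linarith [this]

private lemma energy_antitone {N : ℕ} (hN : 1 ≤ N)
    (hODE : ∀ t : ℝ, 0 < t → deriv (deriv φ) t + ((N:ℝ)-1) * (deriv φ t / t) = φ t - φ t ^ 3) :
    AntitoneOn (fun t => deriv φ t ^ 2 / 2 - φ t ^ 2 / 2 + φ t ^ 4 / 4) (Set.Ici 0) := by
  set E := fun t => deriv φ t ^ 2 / 2 - φ t ^ 2 / 2 + φ t ^ 4 / 4 with hE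
  have hφ' := (contDiff_infty_iff_deriv.mp hφs).2
  have hEderiv : ∀ t, HasDerivAt E
      (deriv φ t * deriv (deriv φ) t - φ t * deriv φ t + φ t ^ 3 * deriv φ t) t := by
    intro t
    have h1 := ((phi_deriv2_hasDeriv hφs t).pow 2).div_const 2
    have h2 := ((phi_deriv_hasDeriv hφs t).pow 2).div_const 2
    have h3 := ((phi_deriv_hasDeriv hφs t).pow 4).div_const 4
    have := (h1.sub h2).add h3
    exact this.congr_deriv (by ring)
  have hEdiff : Differentiable ℝ E := fun t => (hEderiv t).differentiableAt
  refine antitoneOn_of_deriv_nonpos (convex_Ici (0:ℝ)) hEdiff.continuous.continuousOn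
    hEdiff.differentiableOn ?_
  intro t htint
  rw [interior_Ici] at htint
  have htpos : (0:ℝ) < t := htint
  have hODEt := hODE t htpos
  rw [(hEderiv t).deriv]
  have hdd : deriv (deriv φ) t = φ t - φ t ^ 3 - ((N:ℝ)-1) * (deriv φ t / t) := by linarith
  rw [hdd]
  have expand : deriv φ t * (φ t - φ t ^ 3 - ((N:ℝ)-1) * (deriv φ t / t)) - φ t * deriv φ t
      + φ t ^ 3 * deriv φ t = -(((N:ℝ)-1) * (deriv φ t ^2 / t)) := by ring
  rw [expand]
  have hN1 : (1:ℝ) ≤ (N:ℝ) := by exact_mod_cast hN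
  have : 0 ≤ ((N:ℝ)-1) * (deriv φ t ^2 / t) :=
    mul_nonneg (by linarith) (div_nonneg (pow_two_nonneg _) htpos.le)
  linarith

end OneD2

section OneD3
variable {φ : ℝ → ℝ} (hφs : ContDiff ℝ ∞ φ)
include hφs

private lemma phi0_gt_one {N : ℕ} (hN : 1 ≤ N) (hpos : ∀ t, 0 < φ t)
    (hd0 : deriv φ 0 = 0)
    (hODE : ∀ t : ℝ, 0 < t → deriv (deriv φ) t + ((N:ℝ)-1) * (deriv φ t / t) = φ t - φ t ^ 3)
    (hsmall : ∀ ε : ℝ, 0 < ε → ∃ r : ℝ, 0 ≤ r ∧ φ r ^ 2 < ε) :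
    1 < φ 0 := by
  by_contra hle
  push_neg at hle
  have h0 : 0 < φ 0 := hpos 0
  have hsq : φ 0 ^ 2 ≤ 1 := by nlinarith
  have hεpos : 0 < φ 0 ^ 2 - φ 0 ^ 4 / 2 := by nlinarith [pow_pos h0 2]
  obtain ⟨r, hr0, hrsmall⟩ := hsmall (φ 0 ^ 2 - φ 0 ^ 4 / 2) hεpos
  have hanti := energy_antitone hφs hN hODE
  have hEr := hanti (Set.self_mem_Ici) hr0 hr0
  simp only at hEr
  rw [hd0] at hEr
  have h2 : (0:ℝ) ≤ deriv φ r ^ 2 := pow_two_nonneg _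
  have h4 : (0:ℝ) ≤ φ r ^ 4 := by positivity
  nlinarith

private lemma G_lower (hd0 : deriv φ 0 = 0) (hsec : deriv (deriv φ) 0 < 0)
    (hpos0 : 0 < φ 0) :
    ∃ a : ℝ, 0 < a ∧ ∃ δ : ℝ, 0 < δ ∧ δ ≤ 1 ∧
      ∀ r : ℝ, 0 < r → r ≤ δ → a * r ≤ |2 * (φ r * deriv φ r)| := by
  set G := fun t => φ t * deriv φ t with hG
  set a := φ 0 * (-(deriv (deriv φ) 0)) with ha
  have hapos : 0 < a := mul_pos hpos0 (by linarith)
  have hGd : HasDerivAt G (-a) 0 := by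
    have := (phi_deriv_hasDeriv hφs 0).mul (phi_deriv2_hasDeriv hφs 0)
    exact this.congr_deriv (by rw [hd0, ha]; ring)
  have hslope := hasDerivAt_iff_tendsto_slope.mp hGd
  have hball : ∀ᶠ t in nhdsWithin 0 {(0:ℝ)}ᶜ, |slope G 0 t - (-a)| < a / 2 := by
    have : Set.Ioo (-a - a/2) (-a + a/2) ∈ nhds (-a) := by
      apply Ioo_mem_nhds <;> linarith
    filter_upwards [hslope this] with t ht
    simp only [Set.mem_preimage, Set.mem_Ioo] at ht
    rw [abs_lt]
    constructor <;> linarith [ht.1, ht.2]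
  rw [Filter.Eventually, Metric.mem_nhdsWithin_iff] at hball
  obtain ⟨ε, hε, hball⟩ := hball
  refine ⟨a, hapos, min (ε/2) 1, by positivity, min_le_right _ _, ?_⟩
  intro r hr hrle
  have hrε : r ∈ Metric.ball (0:ℝ) ε := by
    rw [Metric.mem_ball, Real.dist_eq, sub_zero, abs_of_pos hr]
    have h5 := min_le_left (ε/2) 1
    linarith
  have hmem : r ∈ ({(0:ℝ)}ᶜ : Set ℝ) := by simp [ne_of_gt hr]
  have hb : |slope G 0 r - (-a)| < a / 2 := hball ⟨hrε, hmem⟩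
  have hslope_eq : slope G 0 r = G r / r := by
    simp [slope, hG, hd0, div_eq_inv_mul]
  rw [hslope_eq, abs_lt] at hb
  have h1 : G r / r < -a + a/2 := by linarith [hb.2]
  have h2 : G r < (-a + a/2) * r := by
    rw [div_lt_iff₀ hr] at h1; linarith
  have h3 : 2 * G r ≤ -(a * r) := by nlinarith
  have har : 0 < a * r := mul_pos hapos hr
  have hGr : φ r * deriv φ r = G r := rfl
  rw [hGr, abs_of_nonpos (by linarith : 2 * G r ≤ 0)]
  linarith

end OneD3

set_option maxHeartbeats 1000000 in
/-- Quantitative localization of the maximum point: if `g = Q + v` with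
`‖e^{(2/3)|x|}v‖_∞ ≤ Cμ⁻²` and `‖e^{(1/2)|x|}∇v‖_∞ ≤ Cμ⁻²` for a large parameter `μ`,
and `y` is a small critical point of `|g|²` (i.e. `∇(|g|²)(y) = 0` with `|y| = o(1)`),
then `|y| = O(μ⁻²)`. -/
theorem maximum_point_localization {N : ℕ} (hN : N = 2 ∨ N = 3)
    (Q : EuclideanSpace ℝ (Fin N) → ℝ)
    (hQs : ContDiff ℝ (⊤ : ℕ∞) Q)
    (hQpos : ∀ x, 0 < Q x)
    (hQrad : ∀ x y, ‖x‖ = ‖y‖ → Q x = Q y)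
    (hQeq : ∀ x, -lap Q x + Q x - (Q x) ^ 3 = 0)
    (hQ2 : MemLp Q 2 volume)
    (C : ℝ) (hC : 0 < C) :
    ∃ δ₀ > 0, ∃ K > 0, ∃ μ₀ > 0, ∀ μ : ℝ, μ₀ ≤ μ →
      ∀ v : EuclideanSpace ℝ (Fin N) → ℂ, ContDiff ℝ 1 v →
        (∀ x, Real.exp ((2 / 3) * ‖x‖) * ‖v x‖ ≤ C / μ ^ 2) →
        (∀ x, Real.exp ((1 / 2) * ‖x‖) * ‖fderiv ℝ v x‖ ≤ C / μ ^ 2) →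
        ∀ y : EuclideanSpace ℝ (Fin N), ‖y‖ ≤ δ₀ →
          fderiv ℝ (fun x => ‖((Q x : ℝ) : ℂ) + v x‖ ^ 2) y = 0 →
          ‖y‖ ≤ K / μ ^ 2 := by
  have hN2 : 2 ≤ N := by rcases hN with h | h <;> omega
  have hN1 : 1 ≤ N := by omega
  set j₀ : Fin N := ⟨0, by omega⟩ with hj₀def
  set φ := prof Q j₀ with hφdef
  have hQd : Differentiable ℝ Q := hQs.differentiable (by simp)
  have hφs : ContDiff ℝ ∞ φ := (prof_smooth Q j₀ hQs).of_le (mod_cast le_top)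
  have heven : ∀ t, φ (-t) = φ t := by
    intro t
    apply hQrad
    rw [norm_smul, norm_smul]
    simp
  have hd0 : deriv φ 0 = 0 := deriv_zero_of_even hφs heven
  have hODE : ∀ t : ℝ, 0 < t →
      deriv (deriv φ) t + ((N:ℝ)-1) * (deriv φ t / t) = φ t - φ t ^ 3 := by
    intro t ht
    have h1 := hQeq (t • EuclideanSpace.single j₀ 1)
    rw [lap_prof Q j₀ hQs hQrad ht] at h1
    have h2 : Q (t • EuclideanSpace.single j₀ 1) = φ t := rfl
    rw [h2] at h1
    linarith
  have hφpos : ∀ t, 0 < φ t := fun t => hQpos _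
  have hsmall : ∀ ε : ℝ, 0 < ε → ∃ r : ℝ, 0 ≤ r ∧ φ r ^ 2 < ε := by
    intro ε hε
    by_contra hcon
    push_neg at hcon
    have hall : ∀ x : EuclideanSpace ℝ (Fin N), ε ≤ Q x ^ 2 := by
      intro x
      rw [prof_eq Q j₀ hQrad x]
      exact hcon ‖x‖ (norm_nonneg x)
    have hint := hQ2.integrable_sq
    have hlt := hint.measure_ge_lt_top hε
    have hset : {a | ε ≤ Q a ^ 2} = Set.univ := Set.eq_univ_of_forall hall
    rw [hset] at hlt
    haveI : Nontrivial (EuclideanSpace ℝ (Fin N)) := by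
      refine nontrivial_of_ne (EuclideanSpace.single j₀ 1) 0 ?_
      intro h
      have h1 : ‖EuclideanSpace.single j₀ (1:ℝ)‖ = 1 := by
        rw [EuclideanSpace.norm_single]; norm_num
      rw [h] at h1
      simp at h1
    rw [MeasureTheory.measure_univ_of_isAddLeftInvariant (μ := volume)] at hlt
    exact absurd hlt (by simp)
  have h01 : 1 < φ 0 := phi0_gt_one hφs hN1 hφpos hd0 hODE hsmall
  have hsecN := second_deriv_at_zero hφs heven hODE
  have hNr : (0:ℝ) < (N:ℝ) := by exact_mod_cast Nat.pos_of_ne_zero (by omega)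
  have hsec : deriv (deriv φ) 0 < 0 := by
    have hsq : 1 < φ 0 ^ 2 := by nlinarith
    have hrhs : φ 0 - φ 0 ^ 3 < 0 := by nlinarith [mul_pos (hφpos 0) (sub_pos.mpr hsq)]
    by_contra hge
    push_neg at hge
    nlinarith [mul_nonneg hNr.le hge]
  obtain ⟨a, hapos, δ, hδpos, hδle, hG⟩ := G_lower hφs hd0 hsec (by linarith)
  -- uniform bounds for φ and deriv φ on [0,1]
  obtain ⟨M1, hM1⟩ := (isCompact_Icc (a := (0:ℝ)) (b := 1)).exists_bound_of_continuousOn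
    hφs.continuous.continuousOn
  obtain ⟨M2, hM2⟩ := (isCompact_Icc (a := (0:ℝ)) (b := 1)).exists_bound_of_continuousOn
    ((contDiff_infty_iff_deriv.mp hφs).2.continuous.continuousOn)
  set M := max M1 M2 with hMdef
  have hM0 : 0 ≤ M := by
    have := hM1 0 (by norm_num)
    have h2 := norm_nonneg (φ 0)
    have : (0:ℝ) ≤ M1 := le_trans h2 this
    exact le_trans this (le_max_left _ _)
  have hφb : ∀ r : ℝ, 0 ≤ r → r ≤ 1 → |φ r| ≤ M ∧ |deriv φ r| ≤ M := by
    intro r h0 h1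
    constructor
    · exact le_trans (hM1 r ⟨h0, h1⟩) (le_max_left _ _)
    · exact le_trans (hM2 r ⟨h0, h1⟩) (le_max_right _ _)
  set K := (2 * M + 2 * (M + C) + 2 * C) * C / a with hKdef
  have hKpos : 0 < K := by
    apply div_pos _ hapos
    apply mul_pos _ hC
    nlinarith
  refine ⟨δ, hδpos, K, hKpos, 1, one_pos, ?_⟩
  intro μ hμ v hv1 hv2 hv3 y hyδ hcrit
  have hμ2 : (1:ℝ) ≤ μ ^ 2 := by nlinarith
  have hμ2pos : (0:ℝ) < μ ^ 2 := by linarith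
  by_cases hy0 : y = 0
  · rw [hy0]
    simp only [norm_zero]
    positivity
  -- notation
  set c := C / μ ^ 2 with hcdef
  have hcpos : 0 < c := div_pos hC hμ2pos
  have hcC : c ≤ C := by
    rw [hcdef]
    exact div_le_self hC.le hμ2
  set r := ‖y‖ with hrdef
  have hrpos : 0 < r := norm_pos_iff.mpr hy0
  have hr1 : r ≤ 1 := le_trans hyδ hδle
  set u := r⁻¹ • y with hudef
  have hu : ‖u‖ = 1 := by
    rw [hudef, norm_smul, norm_inv, norm_norm, ← hrdef, inv_mul_cancel₀ (ne_of_gt hrpos)]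
  have hru : r • u = y := by
    rw [hudef, smul_smul, mul_inv_cancel₀ (ne_of_gt hrpos), one_smul]
  -- directional derivative of Q at y
  have hQdir : fderiv ℝ Q y u = deriv φ r := by
    have h1 := prof_hasDeriv_dir Q j₀ hQs hQrad u hu r
    rw [hru] at h1
    exact (h1.deriv).symm
  have hQy : Q y = φ r := prof_eq Q j₀ hQrad y
  -- bounds on v
  have hvy : ‖v y‖ ≤ c := by
    have h := hv2 y
    have h1 : (1:ℝ) ≤ Real.exp (2/3 * ‖y‖) := Real.one_le_exp (by positivity)
    have h2 : ‖v y‖ ≤ Real.exp (2/3 * ‖y‖) * ‖v y‖ := le_mul_of_one_le_left (norm_nonneg _) h1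
    exact le_trans h2 h
  have hvd : ‖fderiv ℝ v y‖ ≤ c := by
    have h := hv3 y
    have h1 : (1:ℝ) ≤ Real.exp (1/2 * ‖y‖) := Real.one_le_exp (by positivity)
    have h2 : ‖fderiv ℝ v y‖ ≤ Real.exp (1/2 * ‖y‖) * ‖fderiv ℝ v y‖ :=
      le_mul_of_one_le_left (norm_nonneg _) h1
    exact le_trans h2 h
  -- derivative of the squared modulus
  have hvF : HasFDerivAt v (fderiv ℝ v y) y := (hv1.differentiable one_ne_zero y).hasFDerivAt
  have hQF : HasFDerivAt Q (fderiv ℝ Q y) y := (hQd y).hasFDerivAt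
  have hre : HasFDerivAt (fun x => (v x).re) (Complex.reCLM.comp (fderiv ℝ v y)) y :=
    Complex.reCLM.hasFDerivAt.comp y hvF
  have him : HasFDerivAt (fun x => (v x).im) (Complex.imCLM.comp (fderiv ℝ v y)) y :=
    Complex.imCLM.hasFDerivAt.comp y hvF
  have hsum := hQF.add hre
  have hsq1 : HasFDerivAt (fun x => (Q x + (v x).re) ^ 2)
      ((2 * (Q y + (v y).re)) • (fderiv ℝ Q y + Complex.reCLM.comp (fderiv ℝ v y))) y := by
    have h := hsum.mul hsum
    have hfun : (fun x => (Q x + (v x).re) * (Q x + (v x).re))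
        = fun x => (Q x + (v x).re) ^ 2 := by
      funext x; ring
    change HasFDerivAt (fun x => (Q x + (v x).re) * (Q x + (v x).re))
      ((Q y + (v y).re) • (fderiv ℝ Q y + Complex.reCLM.comp (fderiv ℝ v y))
        + (Q y + (v y).re) • (fderiv ℝ Q y + Complex.reCLM.comp (fderiv ℝ v y))) y at h
    rw [hfun] at h
    rw [two_mul, add_smul]
    exact h
  have hsq2 : HasFDerivAt (fun x => ((v x).im) ^ 2)
      ((2 * (v y).im) • (Complex.imCLM.comp (fderiv ℝ v y))) y := by
    have h := him.mul him
    have hfun : (fun x => (v x).im * (v x).im) = fun x => ((v x).im) ^ 2 := by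
      funext x; ring
    change HasFDerivAt (fun x => (v x).im * (v x).im)
      ((v y).im • (Complex.imCLM.comp (fderiv ℝ v y))
        + (v y).im • (Complex.imCLM.comp (fderiv ℝ v y))) y at h
    rw [hfun] at h
    rw [two_mul, add_smul]
    exact h
  have hFeq : (fun x => ‖((Q x : ℝ) : ℂ) + v x‖ ^ 2)
      = fun x => (Q x + (v x).re) ^ 2 + ((v x).im) ^ 2 := by
    funext x
    have h1 : ‖((Q x : ℝ) : ℂ) + v x‖ ^ 2 = Complex.normSq (((Q x : ℝ) : ℂ) + v x) := by
      rw [Complex.sq_norm]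
    rw [h1, Complex.normSq_apply]
    simp only [Complex.add_re, Complex.add_im, Complex.ofReal_re, Complex.ofReal_im, zero_add]
    ring
  have hF : HasFDerivAt (fun x => ‖((Q x : ℝ) : ℂ) + v x‖ ^ 2)
      ((2 * (Q y + (v y).re)) • (fderiv ℝ Q y + Complex.reCLM.comp (fderiv ℝ v y))
        + (2 * (v y).im) • (Complex.imCLM.comp (fderiv ℝ v y))) y := by
    rw [hFeq]
    exact hsq1.add hsq2
  have hD0 : ((2 * (Q y + (v y).re)) • (fderiv ℝ Q y + Complex.reCLM.comp (fderiv ℝ v y))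
      + (2 * (v y).im) • (Complex.imCLM.comp (fderiv ℝ v y))) = 0 := by
    rw [← hF.fderiv]
    exact hcrit
  have hDu : 2 * (Q y + (v y).re) * (fderiv ℝ Q y u + (fderiv ℝ v y u).re)
      + 2 * (v y).im * (fderiv ℝ v y u).im = 0 := by
    have := congrArg (fun L : (EuclideanSpace ℝ (Fin N)) →L[ℝ] ℝ => L u) hD0
    simp at this
    linarith [this]
  rw [hQdir, hQy] at hDu
  -- abbreviations
  set p := (v y).re with hpdef
  set q := (v y).im with hqdef
  set R := (fderiv ℝ v y u).re with hRdef
  set I := (fderiv ℝ v y u).im with hIdef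
  have hvyu : ‖fderiv ℝ v y u‖ ≤ c := by
    have h := (fderiv ℝ v y).le_opNorm u
    rw [hu, mul_one] at h
    exact le_trans h hvd
  have hp : |p| ≤ c := le_trans (Complex.abs_re_le_norm _) (by exact hvy)
  have hq : |q| ≤ c := le_trans (Complex.abs_im_le_norm _) (by exact hvy)
  have hR : |R| ≤ c := le_trans (Complex.abs_re_le_norm _) (by exact hvyu)
  have hI : |I| ≤ c := le_trans (Complex.abs_im_le_norm _) (by exact hvyu)
  obtain ⟨hφM, hφ'M⟩ := hφb r hrpos.le hr1
  -- the key identity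
  have hkey : 2 * (φ r * deriv φ r)
      = -(2 * p * deriv φ r + 2 * (φ r + p) * R + 2 * q * I) := by
    linear_combination hDu
  have hGlow := hG r hrpos hyδ
  rw [hkey] at hGlow
  have habs3 : |2 * p * deriv φ r + 2 * (φ r + p) * R + 2 * q * I|
      ≤ 2 * (c * M) + 2 * ((M + c) * c) + 2 * (c * c) := by
    have e1 : |2 * p * deriv φ r| ≤ 2 * (c * M) := by
      rw [show (2:ℝ) * p * deriv φ r = 2 * (p * deriv φ r) by ring, abs_mul, abs_mul, abs_two]
      have := mul_le_mul hp hφ'M (abs_nonneg _) hcpos.le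
      linarith
    have e2 : |2 * (φ r + p) * R| ≤ 2 * ((M + c) * c) := by
      rw [show (2:ℝ) * (φ r + p) * R = 2 * ((φ r + p) * R) by ring, abs_mul, abs_mul, abs_two]
      have h1 : |φ r + p| ≤ M + c := le_trans (abs_add_le _ _) (add_le_add hφM hp)
      have := mul_le_mul h1 hR (abs_nonneg _) (by linarith)
      linarith
    have e3 : |2 * q * I| ≤ 2 * (c * c) := by
      rw [show (2:ℝ) * q * I = 2 * (q * I) by ring, abs_mul, abs_mul, abs_two]
      have := mul_le_mul hq hI (abs_nonneg _) hcpos.le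
      linarith
    calc |2 * p * deriv φ r + 2 * (φ r + p) * R + 2 * q * I|
        ≤ |2 * p * deriv φ r| + |2 * (φ r + p) * R| + |2 * q * I| := abs_add_three _ _ _
      _ ≤ 2 * (c * M) + 2 * ((M + c) * c) + 2 * (c * c) := by linarith
  rw [abs_neg] at hGlow
  have hsum : a * r ≤ (2 * M + 2 * (M + C) + 2 * C) * c := by
    have h1 : 2 * (c * M) ≤ 2 * M * c := by ring_nf; linarith [hcpos.le]
    have h2 : 2 * ((M + c) * c) ≤ 2 * (M + C) * c := by nlinarith
    have h3 : 2 * (c * c) ≤ 2 * C * c := by nlinarith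
    linarith [le_trans hGlow habs3]
  -- conclude
  have hfinal : r ≤ (2 * M + 2 * (M + C) + 2 * C) * c / a := by
    rw [le_div_iff₀ hapos]
    linarith [hsum]
  calc r ≤ (2 * M + 2 * (M + C) + 2 * C) * c / a := hfinal
    _ = K / μ ^ 2 := by rw [hKdef, hcdef]; ring
end
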